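/- If G has an isolated edge e = {u,v} (both u and v have degree 1 and are adjacent), and H is the induced subgraph of G on V(G) \ {u,v}, then c(G) ≤ c(H). -/

import Mathlib

open Classical

variable {V : Type*}

/-- A finset of vertices is independent if no two of its members are adjacent. -/
def IsIndepSet (G : SimpleGraph V) (s : Finset V) : Prop :=
  ∀ u ∈ s, ∀ v ∈ s, ¬ G.Adj u v

/-- The set of faces of the independence complex of `G` (including the empty face). -/
def IndFaces (G : SimpleGraph V) : Set (Finset V) :=
  {s | IsIndepSet G s}

/-- `P` is a matching on the face poset `Δ`: a set of disjoint covering pairs. -/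
def IsPosetMatching (Δ : Set (Finset V)) (P : Set (Finset V × Finset V)) : Prop :=
  (∀ p ∈ P, p.1 ∈ Δ ∧ p.2 ∈ Δ ∧ p.1 ⊆ p.2 ∧ p.2.card = p.1.card + 1) ∧
  (∀ p ∈ P, ∀ q ∈ P, p ≠ q → p.1 ≠ q.1 ∧ p.1 ≠ q.2 ∧ p.2 ≠ q.1 ∧ p.2 ≠ q.2)

/-- A cycle in a matching: distinct matched pairs `{σ₁⊂τ₁},…,{σₙ⊂τₙ}`, `n > 1`,
with `σ_{i+1} ⊂ τ_i` for `i < n` and `σ₁ ⊂ τₙ`. -/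
def MatchingHasCycle (P : Set (Finset V × Finset V)) : Prop :=
  ∃ n : ℕ, 2 ≤ n ∧ ∃ f : ℕ → Finset V × Finset V,
    (∀ i < n, f i ∈ P) ∧ Set.InjOn f (Set.Iio n) ∧
    (∀ i, i + 1 < n → (f (i + 1)).1 ⊂ (f i).2) ∧ (f 0).1 ⊂ (f (n - 1)).2

/-- An acyclic (Morse) matching on the face poset `Δ`. -/
def IsAcyclicMatching (Δ : Set (Finset V)) (P : Set (Finset V × Finset V)) : Prop :=
  IsPosetMatching Δ P ∧ ¬ MatchingHasCycle P

/-- The critical (unmatched) faces of `Δ` with respect to `P`. -/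
def criticalSet (Δ : Set (Finset V)) (P : Set (Finset V × Finset V)) : Set (Finset V) :=
  {s ∈ Δ | ∀ p ∈ P, s ≠ p.1 ∧ s ≠ p.2}

/-- `cInvariant G` is the minimal number of critical cells in an acyclic matching on the
face poset of the independence complex of `G`. -/
noncomputable def cInvariant (G : SimpleGraph V) : ℕ :=
  sInf {n | ∃ P, IsAcyclicMatching (IndFaces G) P ∧ (criticalSet (IndFaces G) P).ncard = n}

/-! Match every face `s` avoiding `u` and `v` with `s ∪ {u}`. The faces left over are
exactly the faces `σ ∪ {v}` with `σ` a face of `Ind(H)`, and an optimal acyclic matching `P` of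
`Ind(H)`, shifted by `v`, matches all of them except the shifts of the critical cells of `P`.
In a cycle of the combined matching all lower faces have the same size; the face following a
pair `(s, s ∪ {u})` would be a lower face inside `s ∪ {u}` avoiding `u`, hence equal to `s`.
So a cycle consists of shifted pairs only, and pulls back to a cycle of `P`. -/

section MatchingCycle

variable {P : Set (Finset V × Finset V)} {n : ℕ} {f : ℕ → Finset V × Finset V}

theorem cycle_card_fst_eq (hcard : ∀ p ∈ P, p.2.card = p.1.card + 1)
    (hfP : ∀ i < n, f i ∈ P)
    (hstep : ∀ i, i + 1 < n → (f (i + 1)).1 ⊂ (f i).2) (hwrap : (f 0).1 ⊂ (f (n - 1)).2) :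
    ∀ i < n, (f i).1.card = (f 0).1.card := by
  have hanti : ∀ i j, i ≤ j → j < n → (f j).1.card ≤ (f i).1.card := by
    intro i j hij
    induction j, hij using Nat.le_induction with
    | base => exact fun _ => le_rfl
    | succ j _ ih =>
      intro hj
      have hlt := Finset.card_lt_card (hstep j hj)
      have hj2 := hcard _ (hfP j (by omega))
      have := ih (by omega)
      omega
  intro i hi
  have hlt := Finset.card_lt_card hwrap
  have hlast := hcard _ (hfP (n - 1) (by omega))
  have h0i := hanti 0 i (Nat.zero_le i) hi
  have hin := hanti i (n - 1) (by omega) (by omega)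
  omega

theorem cycle_exists_next (hn : 2 ≤ n) (hstep : ∀ i, i + 1 < n → (f (i + 1)).1 ⊂ (f i).2)
    (hwrap : (f 0).1 ⊂ (f (n - 1)).2) :
    ∀ i < n, ∃ j < n, j ≠ i ∧ (f j).1 ⊂ (f i).2 := by
  intro i hi
  by_cases h : i + 1 < n
  · exact ⟨i + 1, h, by omega, hstep i h⟩
  · obtain rfl : i = n - 1 := by omega
    exact ⟨0, by omega, by omega, hwrap⟩

end MatchingCycle

theorem IsPosetMatching.union {Δ : Set (Finset V)} {P₁ P₂ : Set (Finset V × Finset V)}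
    (h₁ : IsPosetMatching Δ P₁) (h₂ : IsPosetMatching Δ P₂)
    (hsep : ∀ p ∈ P₁, ∀ q ∈ P₂, p.1 ≠ q.1 ∧ p.1 ≠ q.2 ∧ p.2 ≠ q.1 ∧ p.2 ≠ q.2) :
    IsPosetMatching Δ (P₁ ∪ P₂) := by
  refine ⟨fun p hp => hp.elim (h₁.1 p) (h₂.1 p), ?_⟩
  rintro p (hp | hp) q (hq | hq) hpq
  · exact h₁.2 p hp q hq hpq
  · exact hsep p hp q hq
  · obtain ⟨h11, h12, h21, h22⟩ := hsep q hq p hp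
    exact ⟨h11.symm, h21.symm, h12.symm, h22.symm⟩
  · exact h₂.2 p hp q hq hpq

theorem MatchingHasCycle.of_union_cone {Δ : Set (Finset V)} {C R : Set (Finset V × Finset V)}
    {u : V} (hQ : IsPosetMatching Δ (C ∪ R)) (hu : ∀ p ∈ C ∪ R, u ∉ p.1)
    (hC : ∀ p ∈ C, p.2 = insert u p.1) (h : MatchingHasCycle (C ∪ R)) :
    MatchingHasCycle R := by
  obtain ⟨n, hn, f, hfQ, hinj, hstep, hwrap⟩ := h
  refine ⟨n, hn, f, fun i hi => (hfQ i hi).resolve_left fun hiC => ?_, hinj, hstep, hwrap⟩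
  obtain ⟨j, hj, hji, hsub⟩ := cycle_exists_next hn hstep hwrap i hi
  have hcard := cycle_card_fst_eq (fun p hp => (hQ.1 p hp).2.2.2) hfQ hstep hwrap
  have hsub' : (f j).1 ⊆ (f i).1 := by
    rw [hC _ hiC] at hsub
    exact (Finset.subset_insert_iff_of_notMem (hu _ (hfQ j hj))).1 hsub.subset
  have heq : (f j).1 = (f i).1 :=
    Finset.eq_of_subset_of_card_le hsub' (by rw [hcard i hi, hcard j hj])
  exact (hQ.2 _ (hfQ j hj) _ (hfQ i hi) fun h => hji (hinj hj hi h)).1 heq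

theorem MatchingHasCycle.of_image {W : Type*} (φ : Finset W ↪o Finset V)
    {P : Set (Finset W × Finset W)} (h : MatchingHasCycle (Prod.map φ φ '' P)) :
    MatchingHasCycle P := by
  obtain ⟨n, hn, f, hfP, hinj, hstep, hwrap⟩ := h
  choose! g hgP hg using hfP
  refine ⟨n, hn, g, hgP, fun i hi j hj hij => hinj hi hj (by rw [← hg i hi, ← hg j hj, hij]),
    fun i hi => ?_, ?_⟩
  · have h := hstep i hi
    rw [← hg _ hi, ← hg i (by omega)] at h
    exact φ.lt_iff_lt.1 h
  · rw [← hg 0 (by omega), ← hg (n - 1) (by omega)] at hwrap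
    exact φ.lt_iff_lt.1 hwrap

theorem exists_isAcyclicMatching_ncard_criticalSet_eq (G : SimpleGraph V) :
    ∃ P, IsAcyclicMatching (IndFaces G) P ∧
      (criticalSet (IndFaces G) P).ncard = cInvariant G := by
  apply Nat.sInf_mem (s := {n | ∃ P, IsAcyclicMatching (IndFaces G) P ∧
    (criticalSet (IndFaces G) P).ncard = n})
  refine ⟨_, ∅, ⟨⟨fun p hp => hp.elim, fun p hp => hp.elim⟩, ?_⟩, rfl⟩
  rintro ⟨n, hn, f, hf, -⟩
  exact hf 0 (by omega)

theorem cInvariant_le {G : SimpleGraph V} {P : Set (Finset V × Finset V)}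
    (hP : IsAcyclicMatching (IndFaces G) P) : cInvariant G ≤ (criticalSet (IndFaces G) P).ncard :=
  Nat.sInf_le ⟨P, hP, rfl⟩

section IsolatedEdge

variable {G : SimpleGraph V} {u v : V}

theorem IsIndepSet.mono {s t : Finset V} (hs : IsIndepSet G s) (hts : t ⊆ s) : IsIndepSet G t :=
  fun x hx y hy => hs x (hts hx) y (hts hy)

theorem isIndepSet_insert {s : Finset V} :
    IsIndepSet G (insert u s) ↔ IsIndepSet G s ∧ ∀ w ∈ s, ¬ G.Adj u w := by
  simp only [IsIndepSet, Finset.mem_insert, forall_eq_or_imp, SimpleGraph.irrefl,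
    not_false_eq_true, true_and]
  exact ⟨fun h => ⟨fun x hx y hy => (h.2 x hx).2 y hy, h.1⟩,
    fun h => ⟨h.2, fun x hx => ⟨fun hxu => h.2 x hx hxu.symm, h.1 x hx⟩⟩⟩

def coneMatching (G : SimpleGraph V) (u v : V) : Set (Finset V × Finset V) :=
  {p | p.1 ∈ IndFaces G ∧ u ∉ p.1 ∧ v ∉ p.1 ∧ p.2 = insert u p.1}

theorem isPosetMatching_coneMatching (hu : ∀ w, G.Adj u w → w = v) :
    IsPosetMatching (IndFaces G) (coneMatching G u v) := by
  refine ⟨?_, ?_⟩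
  · rintro ⟨s, _⟩ ⟨hs, hus, hvs, rfl : _ = insert u s⟩
    refine ⟨hs, isIndepSet_insert.2 ⟨hs, fun w hw hadj => hvs (hu w hadj ▸ hw)⟩,
      Finset.subset_insert u s, Finset.card_insert_of_notMem hus⟩
  · rintro ⟨s, _⟩ ⟨-, hus, -, rfl : _ = insert u s⟩ ⟨t, _⟩ ⟨-, hut, -, rfl : _ = insert u t⟩
      hpq
    have hst : s ≠ t := by rintro rfl; exact hpq rfl
    refine ⟨hst, fun h => hus (h ▸ Finset.mem_insert_self u t),
      fun h => hut (h ▸ Finset.mem_insert_self u s), fun h => hst ?_⟩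
    simpa [Finset.erase_insert hus, Finset.erase_insert hut] using congrArg (·.erase u) h

theorem notMem_map_subtype_of_mem_pair (σ : Finset ↥(({u, v} : Set V)ᶜ)) {x : V}
    (hx : x = u ∨ x = v) : x ∉ σ.map (Function.Embedding.subtype _) := by
  simp only [Finset.mem_map, Function.Embedding.coe_subtype, not_exists, not_and]
  rintro ⟨y, hy⟩ - rfl
  exact hy hx

noncomputable def liftFace (u v : V) : Finset ↥(({u, v} : Set V)ᶜ) ↪o Finset V :=
  OrderEmbedding.ofMapLEIff (fun σ => insert v (σ.map (Function.Embedding.subtype _)))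
    fun σ τ => by
      rw [Finset.insert_subset_insert_iff (notMem_map_subtype_of_mem_pair σ (Or.inr rfl)),
        Finset.map_subset_map]

theorem liftFace_apply (σ : Finset ↥(({u, v} : Set V)ᶜ)) :
    liftFace u v σ = insert v (σ.map (Function.Embedding.subtype _)) := rfl

theorem mem_liftFace_self (σ : Finset ↥(({u, v} : Set V)ᶜ)) : v ∈ liftFace u v σ :=
  Finset.mem_insert_self _ _

theorem notMem_liftFace (huv : u ≠ v) (σ : Finset ↥(({u, v} : Set V)ᶜ)) :
    u ∉ liftFace u v σ := by
  rw [liftFace_apply, Finset.mem_insert, not_or]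
  exact ⟨huv, notMem_map_subtype_of_mem_pair σ (Or.inl rfl)⟩

theorem card_liftFace (σ : Finset ↥(({u, v} : Set V)ᶜ)) :
    (liftFace u v σ).card = σ.card + 1 := by
  rw [liftFace_apply, Finset.card_insert_of_notMem (notMem_map_subtype_of_mem_pair σ (Or.inr rfl)),
    Finset.card_map]

theorem liftFace_mem_indFaces (hv : ∀ w, G.Adj v w → w = u)
    {σ : Finset ↥(({u, v} : Set V)ᶜ)}
    (hσ : σ ∈ IndFaces (G.induce ({u, v} : Set V)ᶜ)) : liftFace u v σ ∈ IndFaces G := by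
  refine isIndepSet_insert.2 ⟨?_, fun w hw hadj => ?_⟩
  · simp only [IsIndepSet, Finset.mem_map, Function.Embedding.coe_subtype]
    rintro _ ⟨x, hx, rfl⟩ _ ⟨y, hy, rfl⟩
    exact hσ x hx y hy
  · exact notMem_map_subtype_of_mem_pair σ (Or.inl (hv w hadj)) hw

theorem exists_liftFace_eq (huv : G.Adj u v) {s : Finset V} (hs : s ∈ IndFaces G)
    (hvs : v ∈ s) :
    ∃ σ ∈ IndFaces (G.induce ({u, v} : Set V)ᶜ), liftFace u v σ = s := by
  have hus : u ∉ s := fun hus => hs u hus v hvs huv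
  have hS : ∀ x ∈ s.erase v, x ∈ ({u, v} : Set V)ᶜ := by
    intro x hx
    simp only [Set.mem_compl_iff, Set.mem_insert_iff, Set.mem_singleton_iff, not_or]
    exact ⟨fun h => hus (h ▸ Finset.mem_of_mem_erase hx), Finset.ne_of_mem_erase hx⟩
  have hmap : ((s.erase v).subtype (· ∈ ({u, v} : Set V)ᶜ)).map
      (Function.Embedding.subtype _) = s.erase v :=
    Finset.subtype_map_of_mem hS
  refine ⟨(s.erase v).subtype _, fun x hx y hy => ?_, ?_⟩
  · rw [Finset.mem_subtype] at hx hy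
    exact hs x (Finset.mem_of_mem_erase hx) y (Finset.mem_of_mem_erase hy)
  · rw [liftFace_apply, hmap, Finset.insert_erase hvs]

theorem isPosetMatching_image_liftFace (hv : ∀ w, G.Adj v w → w = u)
    {P : Set (Finset ↥(({u, v} : Set V)ᶜ) × Finset ↥(({u, v} : Set V)ᶜ))}
    (hP : IsPosetMatching (IndFaces (G.induce ({u, v} : Set V)ᶜ)) P) :
    IsPosetMatching (IndFaces G) (Prod.map (liftFace u v) (liftFace u v) '' P) := by
  refine ⟨?_, ?_⟩
  · rintro _ ⟨p, hp, rfl⟩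
    obtain ⟨h1, h2, hsub, hcard⟩ := hP.1 p hp
    exact ⟨liftFace_mem_indFaces hv h1, liftFace_mem_indFaces hv h2,
      (liftFace u v).le_iff_le.2 hsub, by simp only [Prod.map, card_liftFace, hcard]⟩
  · rintro _ ⟨p, hp, rfl⟩ _ ⟨q, hq, rfl⟩ hpq
    obtain ⟨h11, h12, h21, h22⟩ := hP.2 p hp q hq fun h => hpq (h ▸ rfl)
    have hinj := (liftFace u v).injective
    exact ⟨hinj.ne h11, hinj.ne h12, hinj.ne h21, hinj.ne h22⟩

def extendMatching (G : SimpleGraph V) (u v : V)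
    (P : Set (Finset ↥(({u, v} : Set V)ᶜ) × Finset ↥(({u, v} : Set V)ᶜ))) :
    Set (Finset V × Finset V) :=
  coneMatching G u v ∪ Prod.map (liftFace u v) (liftFace u v) '' P

variable {P : Set (Finset ↥(({u, v} : Set V)ᶜ) × Finset ↥(({u, v} : Set V)ᶜ))}

theorem isAcyclicMatching_extendMatching (huv : G.Adj u v) (hu : ∀ w, G.Adj u w → w = v)
    (hv : ∀ w, G.Adj v w → w = u)
    (hP : IsAcyclicMatching (IndFaces (G.induce ({u, v} : Set V)ᶜ)) P) :
    IsAcyclicMatching (IndFaces G) (extendMatching G u v P) := by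
  have hmatch : IsPosetMatching (IndFaces G) (extendMatching G u v P) := by
    refine (isPosetMatching_coneMatching hu).union (isPosetMatching_image_liftFace hv hP.1) ?_
    rintro ⟨s, _⟩ ⟨-, hus, hvs, rfl : _ = insert u s⟩ _ ⟨q, -, rfl⟩
    have hvus : v ∉ insert u s := by simp [hvs, huv.ne.symm]
    have hne : ∀ t, v ∉ t → ∀ σ, t ≠ liftFace u v σ := fun t ht σ h =>
      ht (h ▸ mem_liftFace_self σ)
    exact ⟨hne _ hvs _, hne _ hvs _, hne _ hvus _, hne _ hvus _⟩
  refine ⟨hmatch, fun hcyc => hP.2 (MatchingHasCycle.of_image (liftFace u v) ?_)⟩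
  refine hcyc.of_union_cone hmatch ?_ fun p hp => hp.2.2.2
  rintro _ (⟨-, hus, -⟩ | ⟨q, -, rfl⟩)
  · exact hus
  · exact notMem_liftFace huv.ne _

theorem criticalSet_extendMatching_subset (huv : G.Adj u v) :
    criticalSet (IndFaces G) (extendMatching G u v P) ⊆
      liftFace u v '' criticalSet (IndFaces (G.induce ({u, v} : Set V)ᶜ)) P := by
  rintro s ⟨hs, hcrit⟩
  by_cases hvs : v ∈ s
  · obtain ⟨σ, hσ, rfl⟩ := exists_liftFace_eq huv hs hvs
    refine ⟨σ, ⟨hσ, fun q hq => ?_⟩, rfl⟩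
    obtain ⟨h1, h2⟩ := hcrit _ (Or.inr ⟨q, hq, rfl⟩)
    exact ⟨fun h => h1 (congrArg _ h), fun h => h2 (congrArg _ h)⟩
  · exfalso
    by_cases hus : u ∈ s
    · have hcone : (s.erase u, s) ∈ coneMatching G u v :=
        ⟨hs.mono (Finset.erase_subset u s), Finset.notMem_erase u s,
          fun h => hvs (Finset.mem_of_mem_erase h), (Finset.insert_erase hus).symm⟩
      exact (hcrit _ (Or.inl hcone)).2 rfl
    · exact (hcrit (s, insert u s) (Or.inl ⟨hs, hus, hvs, rfl⟩)).1 rfl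

end IsolatedEdge

/-- If `G` has an isolated edge `{u,v}` (both endpoints have degree one) and `H` is the
induced subgraph on the complement of `{u,v}`, then `c(G) ≤ c(H)`. -/
theorem statement_3 {V : Type*} [Finite V] (G : SimpleGraph V) (u v : V)
    (huv : G.Adj u v) (hu : ∀ w, G.Adj u w → w = v) (hv : ∀ w, G.Adj v w → w = u) :
    cInvariant G ≤ cInvariant (G.induce ({u, v} : Set V)ᶜ) := by
  obtain ⟨P, hP, hPcard⟩ :=
    exists_isAcyclicMatching_ncard_criticalSet_eq (G.induce ({u, v} : Set V)ᶜ)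
  calc cInvariant G ≤ (criticalSet (IndFaces G) (extendMatching G u v P)).ncard :=
        cInvariant_le (isAcyclicMatching_extendMatching huv hu hv hP)
    _ ≤ (liftFace u v '' criticalSet (IndFaces (G.induce ({u, v} : Set V)ᶜ)) P).ncard :=
        Set.ncard_le_ncard (criticalSet_extendMatching_subset huv) (Set.toFinite _)
    _ = cInvariant (G.induce ({u, v} : Set V)ᶜ) := by
        rw [Set.ncard_image_of_injective _ (liftFace u v).injective, hPcard]
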